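/- With the lifting map m defined from the ordering of P by edge-squared distance to the source s, for all indices i, j one has ‖m(s) − m(p_j)‖² ≤ ‖m(p_i)‖² + ‖m(p_i) − m(p_j)‖². -/

import Mathlib

open scoped BigOperators
open MeasureTheory RealInnerProductSpace

noncomputable section

/-- Points of `ℝ^d`. -/
abbrev Pt (d : ℕ) : Type := EuclideanSpace ℝ (Fin d)

/-- The edge-squared metric on a point set `P ⊆ ℝ^d`: the infimum over finite chains of points
of `P` from `a` to `b` of the sum of squared Euclidean lengths of the steps. -/
noncomputable def edgeSq {d : ℕ} (P : Set (Pt d)) (a b : Pt d) : ℝ :=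
  sInf {c : ℝ | ∃ (k : ℕ) (p : Fin (k + 1) → Pt d), p 0 = a ∧ p (Fin.last k) = b ∧
    (∀ i, p i ∈ P) ∧ c = ∑ i : Fin k, ‖p i.succ - p i.castSucc‖ ^ 2}

/-! The lifting map `m i` is the truncation of one fixed vector to the coordinates `≤ i`. Hence,
coordinatewise, `m i` either agrees with `m j` or is orthogonal to `m i - m j`, so
`⟪m i, m i - m j⟫ ≥ 0`, which is the inequality after expanding the squares. -/

theorem norm_sq_le_norm_sq_add_norm_sub_sq {E : Type*} [NormedAddCommGroup E]
    [InnerProductSpace ℝ E] {x y : E} (h : 0 ≤ ⟪x, x - y⟫) :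
    ‖y‖ ^ 2 ≤ ‖x‖ ^ 2 + ‖x - y‖ ^ 2 := by
  rw [inner_sub_right, real_inner_self_eq_norm_sq] at h
  rw [norm_sub_sq_real]
  linarith

theorem inner_sub_nonneg_of_forall_mul_sub_nonneg {ι : Type*} [Fintype ι]
    {x y : EuclideanSpace ℝ ι} (h : ∀ k, 0 ≤ x k * (x k - y k)) : 0 ≤ ⟪x, x - y⟫ := by
  rw [PiLp.inner_apply]
  exact Finset.sum_nonneg fun k _ => by simpa [mul_comm] using h k

section Staircase

variable {n : ℕ} {m : Fin (n + 1) → EuclideanSpace ℝ (Fin (n + 1))} {c : Fin n → ℝ}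

theorem staircase_apply (hm0 : m 0 = 0)
    (hstep : ∀ i : Fin n, m i.succ = m i.castSucc + c i • EuclideanSpace.single i.succ 1)
    (j k : Fin (n + 1)) : m j k = if k ≤ j then m k k else 0 := by
  induction j using Fin.induction generalizing k with
  | zero =>
    rcases Fin.eq_zero_or_eq_succ k with rfl | ⟨k, rfl⟩
    · simp
    · simp [hm0, (Fin.succ_pos k).not_ge]
  | succ j ih =>
    by_cases hk : k = j.succ
    · subst hk; simp
    · have hle : k ≤ j.succ ↔ k ≤ j.castSucc := by
        rw [Fin.le_castSucc_iff]; exact ⟨fun h => lt_of_le_of_ne h hk, le_of_lt⟩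
      rw [hstep j, PiLp.add_apply, PiLp.smul_apply, PiLp.single_apply, if_neg hk, ih k]
      simp [hle]

theorem staircase_inner_sub_nonneg (hm0 : m 0 = 0)
    (hstep : ∀ i : Fin n, m i.succ = m i.castSucc + c i • EuclideanSpace.single i.succ 1)
    (i j : Fin (n + 1)) : 0 ≤ ⟪m i, m i - m j⟫ := by
  refine inner_sub_nonneg_of_forall_mul_sub_nonneg fun k => ?_
  rw [staircase_apply hm0 hstep i k, staircase_apply hm0 hstep j k]
  split_ifs <;> simp [mul_self_nonneg]

end Staircase

theorem liftMap_sq_ineq (d n : ℕ) (P : Set (Pt d)) (p : Fin (n + 1) → Pt d)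
    (m : Fin (n + 1) → EuclideanSpace ℝ (Fin (n + 1)))
    (hm0 : m 0 = 0)
    (hrec : ∀ i : Fin n, m i.succ = m i.castSucc +
      Real.sqrt (edgeSq P (p 0) (p i.succ) - edgeSq P (p 0) (p i.castSucc)) •
        EuclideanSpace.single i.succ (1 : ℝ)) :
    ∀ i j : Fin (n + 1),
      ‖m 0 - m j‖ ^ 2 ≤ ‖m i‖ ^ 2 + ‖m i - m j‖ ^ 2 := by
  intro i j
  rw [hm0, zero_sub, norm_neg]
  exact norm_sq_le_norm_sq_add_norm_sub_sq (staircase_inner_sub_nonneg hm0 hrec i j)
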